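/- Let M : ℝ^d → ℝ be differentiable, let z ∈ ℝ^d with M(z) > 0, let δ ∈ (0,1), R > 0 and L > 0, and suppose the gradient map x ↦ ∇M(x) is L-Lipschitz on the closed ball of radius δR centered at z. Set w := M(z)/(δR) + (1/2)·L·δ·R. Then for every unit vector u ∈ ℝ^d with ⟨∇M(z), u⟩ < −w, one has M(z + δR·u) < 0; in particular Φ(z + δR·u) = −1. (Lower-cap sign determination, Eq. (25) of the nonlinear analysis.) -/

import Mathlib

/-!
By the descent lemma, a gradient that is `L`-Lipschitz on the ball keeps `M` below its tangent
paraboloid there: `M (z + r • u) ≤ M z + r ⟪∇M z, u⟫ + L r² / 2` with `r = δR`. The threshold `w`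
is exactly the slope at which this upper bound vanishes, so `⟪∇M z, u⟫ < -w` forces
`M (z + r • u) < 0`. The descent lemma itself compares `t ↦ f (x + t • (y - x))` on `[0, 1]`
with the parabola whose derivative dominates its own.
-/

open Metric
open scoped RealInnerProductSpace

noncomputable section

def Phi {d : ℕ} (M : EuclideanSpace ℝ (Fin d) → ℝ) (x : EuclideanSpace ℝ (Fin d)) : ℝ :=
  if 0 < M x then 0 else -1

open Set
open scoped NNReal

section DescentLemma

variable {E : Type*} [NormedAddCommGroup E] [InnerProductSpace ℝ E] [CompleteSpace E]
  {f : E → ℝ}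

theorem hasDerivAt_comp_add_smul {x v : E} {t : ℝ} (hf : DifferentiableAt ℝ f (x + t • v)) :
    HasDerivAt (fun s : ℝ => f (x + s • v)) ⟪gradient f (x + t • v), v⟫ t := by
  have hline : HasDerivAt (fun s : ℝ => x + s • v) v t := by
    simpa using ((hasDerivAt_id t).smul_const v).const_add x
  simpa [InnerProductSpace.toDual_apply_apply, Function.comp_def] using
    hf.hasGradientAt.hasFDerivAt.comp_hasDerivAt t hline

theorem le_add_inner_gradient_add_sq_of_lipschitzOnWith {s : Set E} {L : ℝ≥0} {x y : E}
    (hs : Convex ℝ s) (hx : x ∈ s) (hy : y ∈ s) (hf : ∀ z ∈ s, DifferentiableAt ℝ f z)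
    (hlip : LipschitzOnWith L (gradient f) s) :
    f y ≤ f x + ⟪gradient f x, y - x⟫ + L / 2 * ‖y - x‖ ^ 2 := by
  set v := y - x
  set c := ⟪gradient f x, v⟫
  have hseg : ∀ t ∈ Icc (0 : ℝ) 1, x + t • v ∈ s := fun t ht => hs.add_smul_sub_mem hx hy ht
  have hderiv : ∀ t ∈ Icc (0 : ℝ) 1,
      HasDerivAt (fun t : ℝ => f (x + t • v)) ⟪gradient f (x + t • v), v⟫ t :=
    fun t ht => hasDerivAt_comp_add_smul (hf _ (hseg t ht))
  have hB : ∀ t : ℝ, HasDerivAt (fun t : ℝ => f x + t * c + L / 2 * ‖v‖ ^ 2 * t ^ 2)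
      (c + L * ‖v‖ ^ 2 * t) t := by
    intro t
    refine ((((hasDerivAt_id t).mul_const c).const_add (f x)).add
      ((hasDerivAt_pow 2 t).const_mul (L / 2 * ‖v‖ ^ 2))).congr_deriv ?_
    push_cast
    ring
  have hbound : ∀ t ∈ Ico (0 : ℝ) 1, ⟪gradient f (x + t • v), v⟫ ≤ c + L * ‖v‖ ^ 2 * t := by
    intro t ht
    have ht' : t ∈ Icc (0 : ℝ) 1 := Ico_subset_Icc_self ht
    have hlip_t : ‖gradient f (x + t • v) - gradient f x‖ ≤ L * (t * ‖v‖) := by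
      have := hlip.norm_sub_le (hseg t ht') hx
      rwa [add_sub_cancel_left, norm_smul, Real.norm_of_nonneg ht.1] at this
    calc ⟪gradient f (x + t • v), v⟫ = c + ⟪gradient f (x + t • v) - gradient f x, v⟫ := by
          rw [inner_sub_left]; ring
      _ ≤ c + ‖gradient f (x + t • v) - gradient f x‖ * ‖v‖ := by
          gcongr; exact real_inner_le_norm _ _
      _ ≤ c + L * (t * ‖v‖) * ‖v‖ := by gcongr
      _ = c + L * ‖v‖ ^ 2 * t := by ring
  have hcomp := image_le_of_deriv_right_le_deriv_boundary
    (fun t ht => (hderiv t ht).continuousAt.continuousWithinAt)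
    (fun t ht => (hderiv t (Ico_subset_Icc_self ht)).hasDerivWithinAt)
    (by simp) (fun t _ => (hB t).continuousAt.continuousWithinAt)
    (fun t _ => (hB t).hasDerivWithinAt) hbound (right_mem_Icc.2 zero_le_one)
  simpa [v] using hcomp

end DescentLemma

theorem brepmi_lower_cap_nonlinear_general {d : ℕ}
    (M : EuclideanSpace ℝ (Fin d) → ℝ) (hMdiff : Differentiable ℝ M)
    (z : EuclideanSpace ℝ (Fin d))
    (δ : ℝ) (hδ : δ ∈ Set.Ioo (0 : ℝ) 1) (R : ℝ) (hR : 0 < R)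
    (L : ℝ) (hL : 0 < L)
    (hlip : LipschitzOnWith (Real.toNNReal L) (gradient M) (closedBall z (δ * R)))
    (w : ℝ) (hw : w = M z / (δ * R) + (1 / 2) * L * δ * R)
    (u : EuclideanSpace ℝ (Fin d)) (hu : ‖u‖ = 1) (hcap : ⟪gradient M z, u⟫ < -w) :
    M (z + (δ * R) • u) < 0 ∧ Phi M (z + (δ * R) • u) = -1 := by
  have hr : 0 < δ * R := mul_pos hδ.1 hR
  have hstep : ‖(δ * R) • u‖ = δ * R := by rw [norm_smul, hu, Real.norm_of_nonneg hr.le, mul_one]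
  have hmem : z + (δ * R) • u ∈ closedBall z (δ * R) := by
    rw [mem_closedBall_iff_norm, add_sub_cancel_left, hstep]
  have hdescent := le_add_inner_gradient_add_sq_of_lipschitzOnWith (convex_closedBall z (δ * R))
    (mem_closedBall_self hr.le) hmem (fun y _ => hMdiff y) hlip
  rw [add_sub_cancel_left, hstep, real_inner_smul_right, Real.coe_toNNReal L hL.le] at hdescent
  have hcap' : δ * R * ⟪gradient M z, u⟫ < -(M z + L / 2 * (δ * R) ^ 2) := by
    calc δ * R * ⟪gradient M z, u⟫ < δ * R * -w := mul_lt_mul_of_pos_left hcap hr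
      _ = -(M z + L / 2 * (δ * R) ^ 2) := by rw [hw]; field_simp [hδ.1.ne', hR.ne']
  have hneg : M (z + (δ * R) • u) < 0 := by linarith
  exact ⟨hneg, by simp [Phi, hneg.not_gt]⟩

/-- lower-cap sign determination, Eq. (25), nonlinear analysis.
Let `M` be differentiable with `M(z) > 0`, `δ ∈ (0,1)`, `R > 0`, `L > 0`, and suppose the
gradient `∇M` is `L`-Lipschitz on the closed ball of radius `δR` around `z`. With
`w := M(z)/(δR) + (1/2)·L·δ·R`, every unit vector `u` with `⟪∇M(z), u⟫ < −w` satisfies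
`M(z + δR·u) < 0`, and in particular `Φ(z + δR·u) = −1`. -/
theorem brepmi_lower_cap_nonlinear {d : ℕ} (hd : 1 ≤ d)
    (M : EuclideanSpace ℝ (Fin d) → ℝ) (hMdiff : Differentiable ℝ M)
    (z : EuclideanSpace ℝ (Fin d)) (hz : 0 < M z)
    (δ : ℝ) (hδ : δ ∈ Set.Ioo (0 : ℝ) 1) (R : ℝ) (hR : 0 < R)
    (L : ℝ) (hL : 0 < L)
    (hlip : LipschitzOnWith (Real.toNNReal L) (gradient M) (closedBall z (δ * R)))
    (w : ℝ) (hw : w = M z / (δ * R) + (1 / 2) * L * δ * R)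
    (u : EuclideanSpace ℝ (Fin d)) (hu : ‖u‖ = 1) (hcap : ⟪gradient M z, u⟫ < -w) :
    M (z + (δ * R) • u) < 0 ∧ Phi M (z + (δ * R) • u) = -1 :=
  brepmi_lower_cap_nonlinear_general M hMdiff z δ hδ R hR L hL hlip w hw u hu hcap

end
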